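/- Let T > 0 and let μ : [0,T] → ℝ be continuous with μ(0) = 0. Let f : ℝ × [0,T] × ℝ → ℝ be measurable with continuous partial derivatives ∂f/∂y(y,t,x) and ∂f/∂t(y,t,x), and suppose there are functions g, g₁, g₂ ∈ L¹(ℝ, dx) with |f(y,t,x)| ≤ g(x), |∂f/∂y(y,t,x)| ≤ g₁(x), and |∂f/∂t(y,t,x)| ≤ g₂(x) for all (y,t,x). Define F(z,t,x) = ∫_0^z f(y,t,x) dy and F̃(z,t) = ∫_0^z ∫_ℝ f(y,t,x) dx dy. Then ∫_ℝ ( F(μ(T), T, x) − ∫_0^T (∂F/∂t)(μ(t), t, x) dt ) dx = F̃(μ(T), T) − ∫_0^T (∂F̃/∂t)(μ(t), t) dt. -/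

import Mathlib

/-!
Both sides are iterated integrals with dominated integrands, so the identity is Fubini's theorem
applied three times: `|f y T x| ≤ g x` on a bounded `y`-interval, `|f't y t x| ≤ g₂ x` on a
bounded `y`-interval for each `t`, and `|∫_0^{μ t} f't y t x dy| ≤ (sup_{[0,T]} |μ|) g₂ x` for
`t ∈ [0, T]`. Joint measurability of the last integrand comes from continuity, once `μ` is
replaced by a continuous extension of `μ|[0,T]` to `ℝ`, which changes none of the integrals.
-/

open MeasureTheory Set Function
open scoped Interval

section IntervalFubini

variable {α E : Type*} [MeasurableSpace α] {ν : Measure α} [NormedAddCommGroup E]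

theorem integrable_uncurry_of_norm_le {h : ℝ → α → E} {g : α → ℝ} {a b : ℝ}
    (hm : AEStronglyMeasurable (uncurry h) ((volume.restrict (Ι a b)).prod ν))
    (hg : Integrable g ν) (hb : ∀ y ∈ Ι a b, ∀ x, ‖h y x‖ ≤ g x) :
    Integrable (uncurry h) ((volume.restrict (Ι a b)).prod ν) := by
  have : IsFiniteMeasure (volume.restrict (Ι a b)) := ⟨by simp⟩
  refine ((integrable_const (1 : ℝ)).mul_prod hg).mono' hm ?_
  have hmem : ∀ᵐ p ∂(volume.restrict (Ι a b)).prod ν, p.1 ∈ Ι a b :=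
    Measure.quasiMeasurePreserving_fst.ae (ae_restrict_mem measurableSet_uIoc)
  filter_upwards [hmem] with p hp
  simpa [uncurry] using hb p.1 hp p.2

theorem MeasureTheory.Integrable.intervalIntegral_prod_right [SFinite ν] [NormedSpace ℝ E]
    {h : ℝ → α → E} {a b : ℝ} (hh : Integrable (uncurry h) ((volume.restrict (Ι a b)).prod ν)) :
    Integrable (fun x => ∫ y in a..b, h y x) ν := by
  simp_rw [intervalIntegral.intervalIntegral_eq_integral_uIoc]
  exact hh.integral_prod_right.smul (if a ≤ b then (1 : ℝ) else -1)

end IntervalFubini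

theorem integrable_uncurry_parametric_primitive_comp {μ : ℝ → ℝ} (hμ : Continuous μ)
    {F : ℝ → ℝ → ℝ → ℝ} (hF : Continuous fun p : ℝ × ℝ × ℝ => F p.1 p.2.1 p.2.2)
    {g : ℝ → ℝ} (hg : Integrable g) (hFg : ∀ y t x, |F y t x| ≤ g x) (a b : ℝ) :
    Integrable (uncurry fun t x => ∫ y in (0:ℝ)..μ t, F y t x)
      ((volume.restrict (Ι a b)).prod volume) := by
  have hcont : Continuous (uncurry fun t x => ∫ y in (0:ℝ)..μ t, F y t x) :=
    intervalIntegral.continuous_parametric_intervalIntegral_of_continuous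
      (f := fun (p : ℝ × ℝ) y => F y p.1 p.2)
      (hF.comp (continuous_snd.prodMk continuous_fst)) (hμ.comp continuous_fst)
  obtain ⟨C, hC⟩ := isCompact_uIcc.exists_bound_of_continuousOn (hμ.continuousOn (s := [[a, b]]))
  refine integrable_uncurry_of_norm_le hcont.aestronglyMeasurable (hg.const_mul C)
    fun t ht x => ?_
  calc ‖∫ y in (0:ℝ)..μ t, F y t x‖ ≤ g x * |μ t - 0| :=
        intervalIntegral.norm_integral_le_of_norm_le_const fun y _ => hFg y t x
    _ ≤ g x * C := by
        gcongr
        · exact (abs_nonneg _).trans (hFg 0 0 x)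
        · simpa using hC t (uIoc_subset_uIcc ht)
    _ = C * g x := mul_comm _ _

theorem fubini_symmetric_integral_of_continuous (T : ℝ) {μ : ℝ → ℝ} (hμ : Continuous μ)
    {f f't : ℝ → ℝ → ℝ → ℝ} {g g₂ : ℝ → ℝ}
    (hfmeas : Measurable (fun p : ℝ × ℝ × ℝ => f p.1 p.2.1 p.2.2))
    (hf'tcont : Continuous (fun p : ℝ × ℝ × ℝ => f't p.1 p.2.1 p.2.2))
    (hg : Integrable g) (hg₂ : Integrable g₂)
    (hfg : ∀ y t x, |f y t x| ≤ g x) (hfg₂ : ∀ y t x, |f't y t x| ≤ g₂ x) :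
    (∫ x, ((∫ y in (0:ℝ)..μ T, f y T x) - ∫ t in (0:ℝ)..T, ∫ y in (0:ℝ)..μ t, f't y t x)) =
      (∫ y in (0:ℝ)..μ T, ∫ x, f y T x) -
        ∫ t in (0:ℝ)..T, ∫ y in (0:ℝ)..μ t, ∫ x, f't y t x := by
  have hfT : Measurable (uncurry fun y x => f y T x) :=
    hfmeas.comp (measurable_fst.prodMk (measurable_const.prodMk measurable_snd))
  have hf't (t : ℝ) : Continuous (uncurry fun y x => f't y t x) :=
    hf'tcont.comp (continuous_fst.prodMk (continuous_const.prodMk continuous_snd))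
  have hfront := integrable_uncurry_of_norm_le (a := 0) (b := μ T) hfT.aestronglyMeasurable hg
    fun y _ x => hfg y T x
  have hbulk := integrable_uncurry_parametric_primitive_comp hμ hf'tcont hg₂ hfg₂ 0 T
  have hslice (t : ℝ) :
      ∫ x, ∫ y in (0:ℝ)..μ t, f't y t x = ∫ y in (0:ℝ)..μ t, ∫ x, f't y t x :=
    (intervalIntegral_integral_swap <| integrable_uncurry_of_norm_le
      (hf't t).aestronglyMeasurable hg₂ fun y _ x => hfg₂ y t x).symm
  rw [integral_sub hfront.intervalIntegral_prod_right hbulk.intervalIntegral_prod_right,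
    ← intervalIntegral_integral_swap hfront, ← intervalIntegral_integral_swap hbulk]
  simp only [hslice]

theorem fubini_symmetric_integral_general
    (T : ℝ) (hT : 0 < T)
    (μ : ℝ → ℝ) (hμ : ContinuousOn μ (Icc 0 T))
    (f f't : ℝ → ℝ → ℝ → ℝ)
    (hfmeas : Measurable (fun p : ℝ × ℝ × ℝ => f p.1 p.2.1 p.2.2))
    (hf'tcont : Continuous (fun p : ℝ × ℝ × ℝ => f't p.1 p.2.1 p.2.2))
    (g g₂ : ℝ → ℝ)
    (hg : Integrable g) (hg₂ : Integrable g₂)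
    (hfg : ∀ (y t x : ℝ), |f y t x| ≤ g x)
    (hfg₂ : ∀ (y t x : ℝ), |f't y t x| ≤ g₂ x) :
    (∫ x : ℝ,
        ((∫ y in (0:ℝ)..(μ T), f y T x) -
          ∫ t in (0:ℝ)..T, ∫ y in (0:ℝ)..(μ t), f't y t x)) =
      (∫ y in (0:ℝ)..(μ T), ∫ x : ℝ, f y T x) -
        ∫ t in (0:ℝ)..T, ∫ y in (0:ℝ)..(μ t), ∫ x : ℝ, f't y t x := by
  set ν := IccExtend hT.le ((Icc 0 T).domRestrict μ)
  have hν : Continuous ν := continuous_IccExtend_iff.mpr hμ.domRestrict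
  have hμν : EqOn μ ν [[0, T]] := fun t ht =>
    (IccExtend_of_mem hT.le ((Icc 0 T).domRestrict μ) (uIcc_of_le hT.le ▸ ht)).symm
  have hcongr_left (x : ℝ) : ∫ t in (0:ℝ)..T, ∫ y in (0:ℝ)..μ t, f't y t x
      = ∫ t in (0:ℝ)..T, ∫ y in (0:ℝ)..ν t, f't y t x :=
    intervalIntegral.integral_congr fun t ht => by simp only [hμν ht]
  have hcongr_right : ∫ t in (0:ℝ)..T, ∫ y in (0:ℝ)..μ t, ∫ x, f't y t x
      = ∫ t in (0:ℝ)..T, ∫ y in (0:ℝ)..ν t, ∫ x, f't y t x :=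
    intervalIntegral.integral_congr fun t ht => by simp only [hμν ht]
  rw [hμν right_mem_uIcc, hcongr_right]
  simp only [hcongr_left]
  exact fubini_symmetric_integral_of_continuous T hν hfmeas hf'tcont hg hg₂ hfg hfg₂

/-- Fubini theorem for the symmetric integral with respect to a continuous stochastic
measure (Lemma 2.2 of the paper), written via the chain-rule representation: with
`F(z,t,x) = ∫_0^z f(y,t,x) dy`, `∂F/∂t(z,t,x) = ∫_0^z ∂f/∂t(y,t,x) dy`,
`F̃(z,t) = ∫_0^z ∫_ℝ f(y,t,x) dx dy` and `∂F̃/∂t(z,t) = ∫_0^z ∫_ℝ ∂f/∂t(y,t,x) dx dy`,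
one has `∫_ℝ (F(μ_T,T,x) - ∫_0^T ∂F/∂t(μ_t,t,x) dt) dx = F̃(μ_T,T) - ∫_0^T ∂F̃/∂t(μ_t,t) dt`. -/
theorem fubini_symmetric_integral
    (T : ℝ) (hT : 0 < T)
    (μ : ℝ → ℝ) (hμ : ContinuousOn μ (Icc 0 T)) (hμ0 : μ 0 = 0)
    (f f'y f't : ℝ → ℝ → ℝ → ℝ)
    (hfmeas : Measurable (fun p : ℝ × ℝ × ℝ => f p.1 p.2.1 p.2.2))
    (hf'y : ∀ (y t x : ℝ), HasDerivAt (fun z => f z t x) (f'y y t x) y)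
    (hf'ycont : Continuous (fun p : ℝ × ℝ × ℝ => f'y p.1 p.2.1 p.2.2))
    (hf't : ∀ (y t x : ℝ), HasDerivAt (fun s => f y s x) (f't y t x) t)
    (hf'tcont : Continuous (fun p : ℝ × ℝ × ℝ => f't p.1 p.2.1 p.2.2))
    (g g₁ g₂ : ℝ → ℝ)
    (hg : Integrable g) (hg₁ : Integrable g₁) (hg₂ : Integrable g₂)
    (hfg : ∀ (y t x : ℝ), |f y t x| ≤ g x)
    (hfg₁ : ∀ (y t x : ℝ), |f'y y t x| ≤ g₁ x)
    (hfg₂ : ∀ (y t x : ℝ), |f't y t x| ≤ g₂ x) :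
    (∫ x : ℝ,
        ((∫ y in (0:ℝ)..(μ T), f y T x) -
          ∫ t in (0:ℝ)..T, ∫ y in (0:ℝ)..(μ t), f't y t x)) =
      (∫ y in (0:ℝ)..(μ T), ∫ x : ℝ, f y T x) -
        ∫ t in (0:ℝ)..T, ∫ y in (0:ℝ)..(μ t), ∫ x : ℝ, f't y t x :=
  fubini_symmetric_integral_general T hT μ hμ f f't hfmeas hf'tcont g g₂ hg hg₂ hfg hfg₂
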